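/- Let n ≥ 3 and let P, Q : Fin n → ℝ² be counterclockwise strictly convex polygons such that (P i).2 = (Q i).2 for every index i (corresponding vertices lie on the same horizontal line) and (P i).2 ≠ (P (i+1)).2 for every i (indices mod n; no edge is horizontal). Then for every t ∈ [0,1], the map i ↦ (1−t)·P(i) + t·Q(i) is a counterclockwise strictly convex polygon. In other words, the linear morph from P to Q is strictly convex, and it is unidirectional since every vertex moves along its own horizontal line. -/

import Mathlib

noncomputable section

/-- Cross product of two planar vectors: cross((a,b),(c,d)) = a·d − b·c. -/
def cross (a b : ℝ × ℝ) : ℝ := a.1 * b.2 - a.2 * b.1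

/-- Standard inner product on ℝ². -/
def inner2 (a b : ℝ × ℝ) : ℝ := a.1 * b.1 + a.2 * b.2

/-- `p` is a counterclockwise convex polygon: pairwise distinct vertices and
`cross (p(i+1) − p(i)) (p(j) − p(i)) ≥ 0` for all `i` and all `j ∉ {i, i+1}`. -/
def IsCCWConvex {n : ℕ} [NeZero n] (p : Fin n → ℝ × ℝ) : Prop :=
  Function.Injective p ∧
    ∀ i j : Fin n, j ≠ i → j ≠ i + 1 → 0 ≤ cross (p (i + 1) - p i) (p j - p i)

/-- `p` is a counterclockwise strictly convex polygon. -/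
def IsCCWStrictConvex {n : ℕ} [NeZero n] (p : Fin n → ℝ × ℝ) : Prop :=
  Function.Injective p ∧
    ∀ i j : Fin n, j ≠ i → j ≠ i + 1 → 0 < cross (p (i + 1) - p i) (p j - p i)

/-- `p` is a convex polygon: it or its index-reversal is counterclockwise convex. -/
def IsConvexPolygon {n : ℕ} [NeZero n] (p : Fin n → ℝ × ℝ) : Prop :=
  IsCCWConvex p ∨ IsCCWConvex (p ∘ Fin.rev)

/-- `p` is a strictly convex polygon: it or its index-reversal is
counterclockwise strictly convex. -/
def IsStrictConvexPolygon {n : ℕ} [NeZero n] (p : Fin n → ℝ × ℝ) : Prop :=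
  IsCCWStrictConvex p ∨ IsCCWStrictConvex (p ∘ Fin.rev)

/-- The polygon `p` is `d`-monotone: there are indices `s ≠ t` such that both of
the two paths from `s` to `t` around the cyclic sequence (one in each cyclic
direction) have strictly increasing inner product with `d` along the traversal. -/
def PolyMonotoneIn {n : ℕ} [NeZero n] (d : ℝ × ℝ) (p : Fin n → ℝ × ℝ) : Prop :=
  ∃ s t : Fin n, s ≠ t ∧
    (∀ k : ℕ, k < ((t - s : Fin n) : ℕ) →
      inner2 d (p (s + (Fin.ofNat n k))) < inner2 d (p (s + (Fin.ofNat n k) + 1))) ∧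
    (∀ k : ℕ, k < ((s - t : Fin n) : ℕ) →
      inner2 d (p (s - (Fin.ofNat n k))) < inner2 d (p (s - (Fin.ofNat n k) - 1)))


/-!
With the second coordinates fixed, `cross a b = a.1 * b.2 - a.2 * b.1` is affine in the first
coordinates, which are exactly what the morph interpolates. Hence every orientation test of the
intermediate polygon is the convex combination `(1 - t) • (test for P) + t • (test for Q)` of two
positive numbers. Distinctness of the vertices follows from the strict tests once `n ≥ 3`.
-/

lemma cross_convexComb_of_snd_eq {a a' b b' : ℝ × ℝ} (ha : a.2 = a'.2) (hb : b.2 = b'.2)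
    (t : ℝ) :
    cross ((1 - t) • a + t • a') ((1 - t) • b + t • b') = (1 - t) * cross a b + t * cross a' b' := by
  simp only [cross, Prod.fst_add, Prod.snd_add, Prod.smul_fst, Prod.smul_snd, smul_eq_mul, ← ha,
    ← hb]
  ring

lemma convexComb_sub_convexComb (a a' b b' : ℝ × ℝ) (t : ℝ) :
    ((1 - t) • a + t • a') - ((1 - t) • b + t • b') = (1 - t) • (a - b) + t • (a' - b') := by
  module

lemma cross_levelMorph {n : ℕ} [NeZero n] {P Q : Fin n → ℝ × ℝ}
    (hlevel : ∀ i, (P i).2 = (Q i).2) (t : ℝ) (i j : Fin n) :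
    let R := fun k => (1 - t) • P k + t • Q k
    cross (R (i + 1) - R i) (R j - R i)
      = (1 - t) * cross (P (i + 1) - P i) (P j - P i) + t * cross (Q (i + 1) - Q i) (Q j - Q i) := by
  simp only [convexComb_sub_convexComb]
  exact cross_convexComb_of_snd_eq (by simp [hlevel]) (by simp [hlevel]) t

lemma Fin.add_one_add_one_ne_self {n : ℕ} [NeZero n] (hn : 3 ≤ n) (a : Fin n) : a + 1 + 1 ≠ a := by
  rw [add_assoc, Ne, add_eq_left, Fin.ext_iff, Fin.val_add, Fin.val_one', Fin.val_zero,
    Nat.one_mod_eq_one.mpr (by omega), Nat.mod_eq_of_lt (by omega)]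
  omega

lemma isCCWStrictConvex_of_cross_pos {n : ℕ} [NeZero n] (hn : 3 ≤ n) {p : Fin n → ℝ × ℝ}
    (h : ∀ i j : Fin n, j ≠ i → j ≠ i + 1 → 0 < cross (p (i + 1) - p i) (p j - p i)) :
    IsCCWStrictConvex p := by
  refine ⟨fun a b hab => ?_, h⟩
  by_contra hne
  have collapse : ∀ i j, j ≠ i → j ≠ i + 1 → p j ≠ p i := fun i j hji hji1 hp => by
    simpa [hp, cross] using h i j hji hji1
  by_cases hba : a = b + 1
  · by_cases hab' : b = a + 1
    · exact Fin.add_one_add_one_ne_self hn a (by rw [← hab', hba])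
    · exact collapse a b (Ne.symm hne) hab' hab.symm
  · exact collapse b a hne hba hab

theorem level_morph_strictConvex_general {n : ℕ} [NeZero n] (hn : 3 ≤ n)
    (P Q : Fin n → ℝ × ℝ)
    (hP : IsCCWStrictConvex P) (hQ : IsCCWStrictConvex Q)
    (hlevel : ∀ i : Fin n, (P i).2 = (Q i).2) :
    ∀ t ∈ Set.Icc (0 : ℝ) 1,
      IsCCWStrictConvex (fun i => (1 - t) • P i + t • Q i) := by
  rintro t ⟨ht0, ht1⟩
  refine isCCWStrictConvex_of_cross_pos hn fun i j hji hji1 => ?_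
  rw [cross_levelMorph hlevel]
  exact convex_Ioi (0 : ℝ) (hP.2 i j hji hji1) (hQ.2 i j hji hji1) (by linarith) ht0 (by ring)

/-- The linear morph between two counterclockwise strictly convex polygons whose
corresponding vertices lie on the same horizontal lines, none of whose edges is
horizontal, is strictly convex at every time instant (and unidirectional, each
vertex moving along its own horizontal line). -/
theorem level_morph_strictConvex {n : ℕ} [NeZero n] (hn : 3 ≤ n)
    (P Q : Fin n → ℝ × ℝ)
    (hP : IsCCWStrictConvex P) (hQ : IsCCWStrictConvex Q)
    (hlevel : ∀ i : Fin n, (P i).2 = (Q i).2)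
    (hnohoriz : ∀ i : Fin n, (P i).2 ≠ (P (i + 1)).2) :
    ∀ t ∈ Set.Icc (0 : ℝ) 1,
      IsCCWStrictConvex (fun i => (1 - t) • P i + t • Q i) :=
  level_morph_strictConvex_general hn P Q hP hQ hlevel
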